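/- Assume each ℓ_i is convex and (1/γ)-smooth for some γ > 0, and ‖x_i‖ ≤ 1 for all i. Fix a block k and any α ∈ ℝ^n, and set w̄ := Σ_{k'≠k} A_{[k']}α_{[k']}. Let β^(H) be the (random) result of running LocalSDCA for H iterations on block k with this w̄, starting from α_[k]. Then E[ε_{D,k}(α⟨k←β^(H)⟩)] ≤ (1 − (λnγ/(1+λnγ))·(1/ñ))^H · ε_{D,k}(α), where ñ := max_{1≤k≤K} n_k. In other words, LocalSDCA satisfies the local geometric improvement assumption with Θ = (1 − (λnγ/(1+λnγ))·(1/ñ))^H. -/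

import Mathlib

open Finset MeasureTheory

noncomputable section

/-- Squared Euclidean norm of a finite real vector. -/
def sqnorm {m : ℕ} (v : Fin m → ℝ) : ℝ := ∑ j, v j ^ 2

/-- Euclidean norm of a finite real vector. -/
def euclNorm {m : ℕ} (v : Fin m → ℝ) : ℝ := Real.sqrt (sqnorm v)

/-- Euclidean inner product. -/
def dotp {m : ℕ} (u v : Fin m → ℝ) : ℝ := ∑ j, u j * v j

/-- `g` is the (real-valued) Fenchel conjugate of `f`:
`g u` is the least upper bound of `z ↦ u*z - f z`. -/
def IsFenchelConj (f g : ℝ → ℝ) : Prop :=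
  ∀ u : ℝ, IsLUB (Set.range fun z : ℝ => u * z - f z) (g u)

/-- `f` is smooth with constant `c`: differentiable with `c`-Lipschitz derivative. -/
def SmoothWith (c : ℝ) (f : ℝ → ℝ) : Prop :=
  Differentiable ℝ f ∧ ∀ z z' : ℝ, |deriv f z - deriv f z'| ≤ c * |z - z'|

/-- `g : ℝ → ℝ` is `γ`-strongly convex. -/
def StrongConvexWith (γ : ℝ) (g : ℝ → ℝ) : Prop :=
  ConvexOn ℝ Set.univ fun u => g u - γ / 2 * u ^ 2

variable {n d K : ℕ}

/-- `A α` where the `i`-th column of `A` is `x i / (λ n)`. -/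
def matA (lam : ℝ) (x : Fin n → Fin d → ℝ) (α : Fin n → ℝ) : Fin d → ℝ :=
  ∑ i, (α i / (lam * n)) • x i

/-- The block-`k` subvector `α_[k]` of `α`. -/
def blkOf (part : Fin n → Fin K) (k : Fin K) (α : Fin n → ℝ) :
    {i : Fin n // part i = k} → ℝ :=
  fun i => α i.1

/-- `A_[k] β`: the block-`k` submatrix of `A` applied to a block-`k` vector. -/
def blkA (lam : ℝ) (x : Fin n → Fin d → ℝ) (part : Fin n → Fin K) (k : Fin K)
    (β : {i : Fin n // part i = k} → ℝ) : Fin d → ℝ :=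
  ∑ i : {i : Fin n // part i = k}, (β i / (lam * n)) • x i.1

/-- `α⟨k←β⟩`: replace the block-`k` coordinates of `α` by `β`. -/
def updBlk (part : Fin n → Fin K) (k : Fin K) (α : Fin n → ℝ)
    (β : {i : Fin n // part i = k} → ℝ) : Fin n → ℝ :=
  fun i => if h : part i = k then β ⟨i, h⟩ else α i

/-- `ι_k β`: zero-padding of a block-`k` vector to a full vector. -/
def padBlk (part : Fin n → Fin K) (k : Fin K)
    (β : {i : Fin n // part i = k} → ℝ) : Fin n → ℝ :=
  fun i => if h : part i = k then β ⟨i, h⟩ else 0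

/-- The primal objective `P(w)`. -/
def primalObj (lam : ℝ) (x : Fin n → Fin d → ℝ) (l : Fin n → ℝ → ℝ)
    (w : Fin d → ℝ) : ℝ :=
  lam / 2 * sqnorm w + (1 / (n : ℝ)) * ∑ i, l i (dotp w (x i))

/-- The dual objective `D(α)`. -/
def dualObj (lam : ℝ) (x : Fin n → Fin d → ℝ) (lstar : Fin n → ℝ → ℝ)
    (α : Fin n → ℝ) : ℝ :=
  -(lam / 2) * sqnorm (matA lam x α) - (1 / (n : ℝ)) * ∑ i, lstar i (-(α i))

/-- The local suboptimality `ε_{D,k}(α)` on block `k`. -/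
def epsD (lam : ℝ) (x : Fin n → Fin d → ℝ) (lstar : Fin n → ℝ → ℝ)
    (part : Fin n → Fin K) (k : Fin K) (α : Fin n → ℝ) : ℝ :=
  ⨆ β : {i : Fin n // part i = k} → ℝ,
    dualObj lam x lstar (updBlk part k α β) - dualObj lam x lstar α

/-- `σ_min`: the supremum over nonzero `α` of
`λ²n²·(Σ_k ‖A_[k]α_[k]‖² − ‖Aα‖²)/‖α‖²`. -/
def sigmaMin (lam : ℝ) (x : Fin n → Fin d → ℝ) (part : Fin n → Fin K) : ℝ :=
  sSup { r : ℝ | ∃ α : Fin n → ℝ, α ≠ 0 ∧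
    r = lam ^ 2 * (n : ℝ) ^ 2 *
      ((∑ k, sqnorm (blkA lam x part k (blkOf part k α))) - sqnorm (matA lam x α)) /
        sqnorm α }

/-- The local dual objective `D_k(β; w̄)` on block `k`. -/
def locDual (lam : ℝ) (x : Fin n → Fin d → ℝ) (lstar : Fin n → ℝ → ℝ)
    (part : Fin n → Fin K) (k : Fin K) (wbar : Fin d → ℝ)
    (β : {i : Fin n // part i = k} → ℝ) : ℝ :=
  -(lam / 2) * sqnorm (wbar + blkA lam x part k β)
    - (1 / (n : ℝ)) * ∑ i : {i : Fin n // part i = k}, lstar i.1 (-(β i))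
    + lam / 2 * sqnorm wbar

/-- The local primal objective `P_k(v; w̄)` on block `k`. -/
def locPrimal (lam : ℝ) (x : Fin n → Fin d → ℝ) (l : Fin n → ℝ → ℝ)
    (part : Fin n → Fin K) (k : Fin K) (wbar v : Fin d → ℝ) : ℝ :=
  (1 / (n : ℝ)) * ∑ i : {i : Fin n // part i = k}, l i.1 (dotp (wbar + v) (x i.1))
    + lam / 2 * sqnorm v

/-- Run `H` iterations of the coordinate-wise step `st`, where `ω` lists
the (randomly chosen) coordinates used in the successive iterations. -/
def iterRun {γ : Type*} {ι : Type*} (st : ι → γ → γ) :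
    (H : ℕ) → (Fin H → ι) → γ → γ
  | 0, _, b => b
  | H + 1, ω, b => iterRun st H (fun h => ω h.succ) (st (ω 0) b)


/-! Let `f = D_k(·; w̄)` and `S = sup f`. Changing only block `k` changes `D` exactly as it changes
`f`, so `ε_{D,k}(α⟨k←β⟩) = S - f β`. As `ℓ_i` is `(1/γ)`-smooth, `ℓ_i*` is `γ`-strongly convex,
and then the SDCA update moving `-β_i` the fraction `s = λnγ/(1+λnγ)` of the way to `ℓ_i'(z_i)`
raises `f` by at least `s/n` times the Fenchel–Young gap of coordinate `i`, the strong convexity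
paying for the quadratic term since `‖x_i‖ ≤ 1`; the exact coordinate maximisation does at least
as well. The gaps add up to `n (P_k(A_[k]β) - f β) ≥ n (S - f β)` by weak duality, so one
uniformly random step contracts `S - f` in expectation by `1 - s/n_k ≤ 1 - s/ñ`, and `H`
independent steps by its `H`-th power. -/

section Conjugate

variable {f g : ℝ → ℝ}

lemma IsFenchelConj.mul_sub_le (h : IsFenchelConj f g) (u z : ℝ) : u * z - f z ≤ g u :=
  (h u).1 ⟨z, rfl⟩

def youngGap (f g : ℝ → ℝ) (u z : ℝ) : ℝ := f z + g u - u * z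

lemma IsFenchelConj.youngGap_nonneg (h : IsFenchelConj f g) (u z : ℝ) : 0 ≤ youngGap f g u z := by
  have := h.mul_sub_le u z
  rw [youngGap]
  linarith

lemma IsFenchelConj.comp_neg (h : IsFenchelConj f g) :
    IsFenchelConj (fun z => f (-z)) (fun u => g (-u)) := by
  intro u
  convert h (-u) using 1
  ext t
  constructor <;> rintro ⟨z, rfl⟩ <;> exact ⟨-z, by simp⟩

lemma ConvexOn.add_deriv_mul_sub_le (hc : ConvexOn ℝ Set.univ f) (hd : Differentiable ℝ f)
    (x y : ℝ) : f x + deriv f x * (y - x) ≤ f y := by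
  rcases lt_trichotomy x y with hxy | rfl | hxy
  · have h := hc.deriv_le_slope (Set.mem_univ x) (Set.mem_univ y) hxy (hd x)
    rw [slope_def_field, le_div_iff₀ (sub_pos.2 hxy)] at h
    linarith
  · simp
  · have h := hc.slope_le_deriv (Set.mem_univ y) (Set.mem_univ x) hxy (hd x)
    rw [slope_def_field, div_le_iff₀ (sub_pos.2 hxy)] at h
    nlinarith

lemma SmoothWith.continuous_deriv {c : ℝ} (hc : 0 ≤ c) (hs : SmoothWith c f) :
    Continuous (deriv f) :=
  (LipschitzWith.of_dist_le_mul (K := c.toNNReal) fun a b => by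
    simpa [Real.dist_eq, Real.coe_toNNReal c hc] using hs.2 a b).continuous

/-- `w ↦ c/2 w² - f w` is convex, its derivative being monotone. -/
lemma SmoothWith.le_add_deriv_mul_add_sq {c : ℝ} (hs : SmoothWith c f) (x y : ℝ) :
    f y ≤ f x + deriv f x * (y - x) + c / 2 * (y - x) ^ 2 := by
  set φ : ℝ → ℝ := fun w => c / 2 * w ^ 2 - f w
  have hφ : ∀ w, HasDerivAt φ (c * w - deriv f w) w := fun w =>
    (((hasDerivAt_pow 2 w).const_mul (c / 2)).fun_sub (hs.1 w).hasDerivAt).congr_deriv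
      (by norm_num; ring)
  have hφd : Differentiable ℝ φ := fun w => (hφ w).differentiableAt
  have hφc : ConvexOn ℝ Set.univ φ := by
    refine Monotone.convexOn_univ_of_deriv hφd fun a b hab => ?_
    rw [(hφ a).deriv, (hφ b).deriv]
    have h := hs.2 b a
    rw [abs_of_nonneg (sub_nonneg.2 hab)] at h
    linarith [le_abs_self (deriv f b - deriv f a)]
  have h := hφc.add_deriv_mul_sub_le hφd x y
  rw [(hφ x).deriv] at h
  simp only [φ] at h
  nlinarith

lemma IsFenchelConj.apply_deriv (h : IsFenchelConj f g) (hc : ConvexOn ℝ Set.univ f)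
    (hd : Differentiable ℝ f) (z : ℝ) : g (deriv f z) = deriv f z * z - f z := by
  refine le_antisymm ((h _).2 ?_) (h.mul_sub_le _ z)
  rintro _ ⟨y, rfl⟩
  linarith [hc.add_deriv_mul_sub_le hd z y]

/-- Otherwise `f` grows at most linearly with slope `m`, and `g (m + 1)` would be infinite. -/
lemma IsFenchelConj.exists_lt_deriv (h : IsFenchelConj f g) (hd : Differentiable ℝ f)
    (m : ℝ) : ∃ z, m < deriv f z := by
  by_contra! hle
  have hanti : Antitone fun z => f z - m * z := by
    refine antitone_of_deriv_nonpos (hd.sub (differentiable_id.const_mul m)) fun z => ?_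
    rw [deriv_fun_sub (hd z) (by fun_prop), deriv_const_mul_field', deriv_id'']
    linarith [hle z]
  set z := max 0 (g (m + 1) + f 0 + 1)
  have h₁ := h.mul_sub_le (m + 1) z
  have h₂ : f z - m * z ≤ f 0 - m * 0 := hanti (le_max_left _ _)
  have h₃ : g (m + 1) + f 0 + 1 ≤ z := le_max_right _ _
  linarith

lemma IsFenchelConj.exists_deriv_lt (h : IsFenchelConj f g) (hd : Differentiable ℝ f)
    (m : ℝ) : ∃ z, deriv f z < m := by
  obtain ⟨z, hz⟩ := h.comp_neg.exists_lt_deriv (hd.comp differentiable_neg) (-m)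
  rw [deriv_comp_neg] at hz
  exact ⟨-z, by linarith⟩

lemma IsFenchelConj.surjective_deriv (h : IsFenchelConj f g) (hd : Differentiable ℝ f)
    (hcont : Continuous (deriv f)) : Function.Surjective (deriv f) := fun u => by
  obtain ⟨a, ha⟩ := h.exists_deriv_lt hd u
  obtain ⟨b, hb⟩ := h.exists_lt_deriv hd u
  exact intermediate_value_univ a b hcont ⟨ha.le, hb.le⟩

variable {γ : ℝ}

lemma IsFenchelConj.add_mul_add_sq_le (hγ : 0 < γ) (h : IsFenchelConj f g)
    (hc : ConvexOn ℝ Set.univ f) (hs : SmoothWith (1 / γ) f) (z u : ℝ) :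
    g (deriv f z) + z * (u - deriv f z) + γ / 2 * (u - deriv f z) ^ 2 ≤ g u := by
  obtain ⟨t, rfl⟩ : ∃ t, u = deriv f z + t := ⟨u - deriv f z, by ring⟩
  rw [add_sub_cancel_left]
  have hup := hs.le_add_deriv_mul_add_sq z (z + γ * t)
  have hsq : 1 / γ / 2 * (z + γ * t - z) ^ 2 = γ / 2 * t ^ 2 := by field_simp; ring
  rw [hsq] at hup
  -- test the supremum defining `g u` at `z + γ t`, where the descent lemma bounds `f`
  have hfy := h.mul_sub_le (deriv f z + t) (z + γ * t)
  rw [h.apply_deriv hc hs.1 z]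
  nlinarith

lemma IsFenchelConj.strongConvexOn (hγ : 0 < γ) (h : IsFenchelConj f g)
    (hc : ConvexOn ℝ Set.univ f) (hs : SmoothWith (1 / γ) f) : StrongConvexOn Set.univ γ g := by
  refine ⟨convex_univ, fun a _ b _ s t h₀ h₁ hst => ?_⟩
  obtain rfl : t = 1 - s := by linarith
  simp only [smul_eq_mul, Real.norm_eq_abs, sq_abs]
  obtain ⟨z, hz⟩ := h.surjective_deriv hs.1 (hs.continuous_deriv (by positivity))
    (s * a + (1 - s) * b)
  have ha := h.add_mul_add_sq_le hγ hc hs z a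
  have hb := h.add_mul_add_sq_le hγ hc hs z b
  rw [hz] at ha hb
  nlinarith [mul_le_mul_of_nonneg_left ha h₀, mul_le_mul_of_nonneg_left hb h₁]

end Conjugate

section Euclidean

variable {m : ℕ}

lemma sqnorm_nonneg (v : Fin m → ℝ) : 0 ≤ sqnorm v :=
  Finset.sum_nonneg fun _ _ => sq_nonneg _

lemma sqnorm_le_one_of_euclNorm_le_one {v : Fin m → ℝ} (h : euclNorm v ≤ 1) : sqnorm v ≤ 1 := by
  rwa [euclNorm, Real.sqrt_le_one] at h

lemma sqnorm_zero : sqnorm (0 : Fin m → ℝ) = 0 := by simp [sqnorm]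

lemma sqnorm_add (u v : Fin m → ℝ) :
    sqnorm (u + v) = sqnorm u + 2 * dotp u v + sqnorm v := by
  simp only [sqnorm, dotp, Pi.add_apply, Finset.mul_sum, ← Finset.sum_add_distrib]
  exact Finset.sum_congr rfl fun _ _ => by ring

lemma sqnorm_sub (u v : Fin m → ℝ) :
    sqnorm (u - v) = sqnorm u - 2 * dotp u v + sqnorm v := by
  simp only [sqnorm, dotp, Pi.sub_apply, Finset.mul_sum, ← Finset.sum_sub_distrib,
    ← Finset.sum_add_distrib]
  exact Finset.sum_congr rfl fun _ _ => by ring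

lemma sqnorm_smul (c : ℝ) (v : Fin m → ℝ) : sqnorm (c • v) = c ^ 2 * sqnorm v := by
  simp only [sqnorm, Pi.smul_apply, smul_eq_mul, Finset.mul_sum]
  exact Finset.sum_congr rfl fun _ _ => by ring

lemma dotp_add_left (u v w : Fin m → ℝ) : dotp (u + v) w = dotp u w + dotp v w := by
  simp only [dotp, Pi.add_apply, add_mul, Finset.sum_add_distrib]

lemma dotp_smul_right (c : ℝ) (u v : Fin m → ℝ) : dotp u (c • v) = c * dotp u v := by
  simp only [dotp, Pi.smul_apply, smul_eq_mul, Finset.mul_sum]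
  exact Finset.sum_congr rfl fun _ _ => by ring

lemma dotp_sum_right {ι : Type*} (s : Finset ι) (w : Fin m → ℝ) (F : ι → Fin m → ℝ) :
    dotp w (∑ i ∈ s, F i) = ∑ i ∈ s, dotp w (F i) := by
  simp only [dotp, Finset.sum_apply, Finset.mul_sum]
  exact Finset.sum_comm

end Euclidean

lemma sum_iterRun_le {ι β : Type*} [Fintype ι] (st : ι → β → β) (E : β → ℝ) {q : ℝ}
    (hq : 0 ≤ q) (hstep : ∀ b, ∑ i, E (st i b) ≤ q * E b) (H : ℕ) (b : β) :
    ∑ ω : Fin H → ι, E (iterRun st H ω b) ≤ q ^ H * E b := by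
  induction H generalizing b with
  | zero => simp [iterRun]
  | succ H ih =>
    rw [← (Fin.consEquiv fun _ => ι).sum_comp, Fintype.sum_prod_type]
    calc ∑ i, ∑ ω, E (iterRun st (H + 1) (Fin.consEquiv (fun _ => ι) (i, ω)) b)
        = ∑ i, ∑ ω, E (iterRun st H ω (st i b)) := rfl
      _ ≤ ∑ i, q ^ H * E (st i b) := Finset.sum_le_sum fun i _ => ih (st i b)
      _ ≤ q ^ H * (q * E b) := by
        rw [← Finset.mul_sum]; exact mul_le_mul_of_nonneg_left (hstep b) (pow_nonneg hq H)
      _ = q ^ (H + 1) * E b := by ring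

lemma Finset.sum_update_sub_sum {ι α M : Type*} [Fintype ι] [DecidableEq ι] [AddCommGroup M]
    (F : ι → α → M) (β : ι → α) (i : ι) (c : α) :
    ∑ j, F j (Function.update β i c j) - ∑ j, F j (β j) = F i c - F i (β i) := by
  rw [← Finset.sum_sub_distrib, Finset.sum_eq_single i
    (fun j _ hj => by rw [Function.update_of_ne hj, sub_self]) (by simp)]
  simp

/-- The paper's `w̄`. -/
def offBlkA (lam : ℝ) (x : Fin n → Fin d → ℝ) (part : Fin n → Fin K) (k : Fin K)
    (α : Fin n → ℝ) : Fin d → ℝ :=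
  ∑ j ∈ univ.erase k, blkA lam x part j (blkOf part j α)

section Blocks

variable (part : Fin n → Fin K) (k : Fin K)

lemma blkOf_updBlk (α : Fin n → ℝ) (β : {i : Fin n // part i = k} → ℝ) :
    blkOf part k (updBlk part k α β) = β :=
  funext fun i => by simp [blkOf, updBlk, i.2]

lemma updBlk_updBlk (α : Fin n → ℝ) (β' β : {i : Fin n // part i = k} → ℝ) :
    updBlk part k (updBlk part k α β') β = updBlk part k α β :=
  funext fun i => by unfold updBlk; split_ifs <;> rfl

lemma updBlk_blkOf (α : Fin n → ℝ) : updBlk part k α (blkOf part k α) = α :=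
  funext fun i => by unfold updBlk blkOf; split_ifs <;> rfl

lemma sum_updBlk {M : Type*} [AddCommMonoid M] (F : Fin n → ℝ → M) (α : Fin n → ℝ)
    (β : {i : Fin n // part i = k} → ℝ) :
    ∑ i, F i (updBlk part k α β i)
      = ∑ i : {i : Fin n // part i = k}, F i (β i) + ∑ i : {i // ¬part i = k}, F i (α i) := by
  rw [← Fintype.sum_subtype_add_sum_subtype (fun i => part i = k)]
  congr 1 <;> refine Finset.sum_congr rfl fun i _ => ?_
  · simp [updBlk, i.2]
  · simp [updBlk, i.2]

lemma matA_eq_sum_blkA (lam : ℝ) (x : Fin n → Fin d → ℝ) (α : Fin n → ℝ) :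
    matA lam x α = ∑ j, blkA lam x part j (blkOf part j α) := by
  rw [matA, ← Fintype.sum_fiberwise part]
  rfl

lemma matA_updBlk (lam : ℝ) (x : Fin n → Fin d → ℝ) (α : Fin n → ℝ)
    (β : {i : Fin n // part i = k} → ℝ) :
    matA lam x (updBlk part k α β)
      = offBlkA lam x part k α + blkA lam x part k β := by
  rw [matA_eq_sum_blkA part, ← Finset.sum_erase_add _ _ (mem_univ k), blkOf_updBlk]
  congr 1
  refine Finset.sum_congr rfl fun j hj => congrArg _ (funext fun i => ?_)
  have hik : part i ≠ k := by rw [i.2]; exact Finset.ne_of_mem_erase hj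
  simp [blkOf, updBlk, hik]

lemma dualObj_updBlk_sub (lam : ℝ) (x : Fin n → Fin d → ℝ) (lstar : Fin n → ℝ → ℝ)
    (α : Fin n → ℝ) (β β' : {i : Fin n // part i = k} → ℝ) :
    dualObj lam x lstar (updBlk part k α β) - dualObj lam x lstar (updBlk part k α β')
      = locDual lam x lstar part k (offBlkA lam x part k α) β
        - locDual lam x lstar part k (offBlkA lam x part k α) β' := by
  simp only [dualObj, locDual, matA_updBlk,
    sum_updBlk part k (fun i t => lstar i (-t))]
  ring

lemma epsD_updBlk (lam : ℝ) (x : Fin n → Fin d → ℝ) (lstar : Fin n → ℝ → ℝ)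
    (α : Fin n → ℝ) (hbdd : BddAbove (Set.range
      (locDual lam x lstar part k (offBlkA lam x part k α))))
    (β' : {i : Fin n // part i = k} → ℝ) :
    epsD lam x lstar part k (updBlk part k α β')
      = (⨆ β, locDual lam x lstar part k (offBlkA lam x part k α) β)
        - locDual lam x lstar part k (offBlkA lam x part k α) β' := by
  simp only [epsD, updBlk_updBlk, dualObj_updBlk_sub]
  exact (ciSup_sub hbdd _).symm

end Blocks

section LocalDual

variable {lam γ : ℝ} {x : Fin n → Fin d → ℝ} {l lstar : Fin n → ℝ → ℝ}
  {part : Fin n → Fin K} {k : Fin K} (wbar : Fin d → ℝ)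

local notation "ι" => {i : Fin n // part i = k}

lemma sum_mul_dotp_eq (hlam : lam ≠ 0) (hn : (n : ℝ) ≠ 0) (w : Fin d → ℝ) (β : ι → ℝ) :
    ∑ i : ι, β i * dotp w (x i) = lam * n * dotp w (blkA lam x part k β) := by
  rw [blkA, dotp_sum_right, Finset.mul_sum]
  refine Finset.sum_congr rfl fun i _ => ?_
  rw [dotp_smul_right]
  field_simp

lemma locPrimal_sub_locDual (hlam : lam ≠ 0) (hn : (n : ℝ) ≠ 0) (v : Fin d → ℝ) (β : ι → ℝ) :
    locPrimal lam x l part k wbar v - locDual lam x lstar part k wbar β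
      = 1 / n * ∑ i : ι, youngGap (l i) (lstar i) (-β i) (dotp (wbar + v) (x i))
        + lam / 2 * sqnorm (v - blkA lam x part k β) := by
  have hsum : ∑ i : ι, youngGap (l i) (lstar i) (-β i) (dotp (wbar + v) (x i))
      = ∑ i : ι, l i (dotp (wbar + v) (x i)) + ∑ i : ι, lstar i (-β i)
        + lam * n * dotp (wbar + v) (blkA lam x part k β) := by
    simp only [youngGap, neg_mul, sub_neg_eq_add, Finset.sum_add_distrib,
      sum_mul_dotp_eq hlam hn]
  rw [hsum, locPrimal, locDual, sqnorm_sub, sqnorm_add, dotp_add_left]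
  field_simp
  ring

lemma locDual_le_locPrimal (hconj : ∀ i, IsFenchelConj (l i) (lstar i)) (hlam : 0 < lam)
    (hn : 0 < n) (β : ι → ℝ) (v : Fin d → ℝ) :
    locDual lam x lstar part k wbar β ≤ locPrimal lam x l part k wbar v := by
  have hgap := locPrimal_sub_locDual (x := x) (l := l) (lstar := lstar) wbar hlam.ne'
    (by positivity) v β
  have h₁ : 0 ≤ ∑ i : ι, youngGap (l i) (lstar i) (-β i) (dotp (wbar + v) (x i)) :=
    Finset.sum_nonneg fun i _ => (hconj i).youngGap_nonneg _ _
  have h₂ := sqnorm_nonneg (v - blkA lam x part k β)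
  have : 0 ≤ 1 / (n : ℝ) * ∑ i : ι, youngGap (l i) (lstar i) (-β i) (dotp (wbar + v) (x i))
      + lam / 2 * sqnorm (v - blkA lam x part k β) := by positivity
  linarith

lemma bddAbove_range_locDual (hconj : ∀ i, IsFenchelConj (l i) (lstar i)) (hlam : 0 < lam)
    (hn : 0 < n) : BddAbove (Set.range (locDual lam x lstar part k wbar)) :=
  ⟨locPrimal lam x l part k wbar 0, by
    rintro _ ⟨β, rfl⟩; exact locDual_le_locPrimal wbar hconj hlam hn β 0⟩

lemma locDual_update (i : ι) (β : ι → ℝ) (c : ℝ) :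
    locDual lam x lstar part k wbar (Function.update β i c)
      = locDual lam x lstar part k wbar β
        - lam * ((c - β i) / (lam * n) * dotp (wbar + blkA lam x part k β) (x i))
        - lam / 2 * ((c - β i) / (lam * n)) ^ 2 * sqnorm (x i)
        - 1 / n * (lstar i (-c) - lstar i (-β i)) := by
  have hA : blkA lam x part k (Function.update β i c)
      = blkA lam x part k β + ((c - β i) / (lam * n)) • x i := by
    rw [← sub_eq_iff_eq_add', blkA, blkA,
      Finset.sum_update_sub_sum (fun (j : ι) t => (t / (lam * n)) • x j), ← sub_smul, sub_div]
  have hL := Finset.sum_update_sub_sum (fun (j : ι) t => lstar j (-t)) β i c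
  simp only [locDual, hA, ← add_assoc, sqnorm_add _ (_ • x i), dotp_smul_right, sqnorm_smul]
  linear_combination (-(1 : ℝ) / n) * hL

lemma locDual_add_youngGap_le_update (hγ : 0 < γ) (hlam : 0 < lam) (hn : 0 < n)
    (hconj : ∀ i, IsFenchelConj (l i) (lstar i)) (hconv : ∀ i, ConvexOn ℝ Set.univ (l i))
    (hsmooth : ∀ i, SmoothWith (1 / γ) (l i)) {s : ℝ} (hs₀ : 0 ≤ s)
    (hs : s ≤ lam * n * γ / (1 + lam * n * γ)) (β : ι → ℝ) (i : ι) (hxi : sqnorm (x i) ≤ 1) :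
    locDual lam x lstar part k wbar β
        + s / n * youngGap (l i) (lstar i) (-β i) (dotp (wbar + blkA lam x part k β) (x i))
      ≤ locDual lam x lstar part k wbar (Function.update β i
          (β i - s * (deriv (l i) (dotp (wbar + blkA lam x part k β) (x i)) + β i))) := by
  set z := dotp (wbar + blkA lam x part k β) (x i)
  set D := deriv (l i) z
  have hn' : (0 : ℝ) < n := by exact_mod_cast hn
  have hs' : s ≤ lam * n * γ * (1 - s) := by
    rw [le_div_iff₀ (by positivity)] at hs; linarith
  have hs₁ : s ≤ 1 := hs.trans (div_le_one_of_le₀ (by linarith) (by positivity))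
  have hstrong := ((hconj i).strongConvexOn hγ (hconv i) (hsmooth i)).2 (Set.mem_univ D)
    (Set.mem_univ (-β i)) hs₀ (sub_nonneg.2 hs₁) (add_sub_cancel s 1)
  simp only [smul_eq_mul, Real.norm_eq_abs, sq_abs, sub_neg_eq_add] at hstrong
  rw [(hconj i).apply_deriv (hconv i) (hsmooth i).1 z,
    show s * D + (1 - s) * -β i = -(β i - s * (D + β i)) by ring] at hstrong
  rw [locDual_update, sub_sub_cancel_left, youngGap]
  have hquad : lam / 2 * (-(s * (D + β i)) / (lam * n)) ^ 2 * sqnorm (x i)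
      ≤ 1 / n * (s * (1 - s) * (γ / 2 * (D + β i) ^ 2)) := by
    calc _ ≤ lam / 2 * (-(s * (D + β i)) / (lam * n)) ^ 2 :=
          mul_le_of_le_one_right (by positivity) hxi
      _ = s / (lam * n) * (1 / n * (s / 2 * (D + β i) ^ 2)) := by field_simp
      _ ≤ γ * (1 - s) * (1 / n * (s / 2 * (D + β i) ^ 2)) := by
          gcongr; rw [div_le_iff₀ (by positivity)]; linarith
      _ = _ := by ring
  have hlin : lam * (-(s * (D + β i)) / (lam * n) * z) = -(s / n * ((D + β i) * z)) := by
    field_simp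
  rw [hlin]
  have := mul_le_mul_of_nonneg_left hstrong (by positivity : (0 : ℝ) ≤ 1 / n)
  linear_combination this + hquad

lemma sum_sub_locDual_step_le (hγ : 0 < γ) (hlam : 0 < lam) (hn : 0 < n)
    (hconj : ∀ i, IsFenchelConj (l i) (lstar i)) (hconv : ∀ i, ConvexOn ℝ Set.univ (l i))
    (hsmooth : ∀ i, SmoothWith (1 / γ) (l i)) (hx : ∀ i, sqnorm (x i) ≤ 1) {s : ℝ}
    (hs₀ : 0 ≤ s) (hs : s ≤ lam * n * γ / (1 + lam * n * γ)) (st : ι → (ι → ℝ) → ι → ℝ)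
    (hst_max : ∀ i β c, locDual lam x lstar part k wbar (Function.update β i c)
      ≤ locDual lam x lstar part k wbar (st i β))
    {S : ℝ} (hS : ∀ v, S ≤ locPrimal lam x l part k wbar v) (β : ι → ℝ) :
    ∑ i, (S - locDual lam x lstar part k wbar (st i β))
      ≤ (Fintype.card ι - s) * (S - locDual lam x lstar part k wbar β) := by
  set f := locDual lam x lstar part k wbar
  set gap := fun i : ι => youngGap (l i) (lstar i) (-β i) (dotp (wbar + blkA lam x part k β) (x i))
  have hgap : locPrimal lam x l part k wbar (blkA lam x part k β) - f β = 1 / n * ∑ i, gap i := by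
    rw [locPrimal_sub_locDual wbar hlam.ne' (by positivity), sub_self, sqnorm_zero, mul_zero,
      add_zero]
  calc ∑ i, (S - f (st i β))
      ≤ ∑ i, (S - f β - s / n * gap i) := Finset.sum_le_sum fun i _ => by
        linarith [locDual_add_youngGap_le_update wbar hγ hlam hn hconj hconv hsmooth hs₀ hs β i
          (hx i), hst_max i β (β i - s * (deriv (l i) (dotp (wbar + blkA lam x part k β) (x i))
          + β i))]
    _ = Fintype.card ι * (S - f β) - s * (1 / n * ∑ i, gap i) := by
        rw [Finset.sum_sub_distrib, ← Finset.mul_sum, Finset.sum_const, Finset.card_univ,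
          nsmul_eq_mul]
        ring
    _ ≤ (Fintype.card ι - s) * (S - f β) := by
        rw [← hgap]; nlinarith [hS (blkA lam x part k β)]

end LocalDual

lemma sub_pow_mul_div_pow_le {a b s E : ℝ} (ha : 0 < a) (hs₀ : 0 ≤ s) (hsa : s ≤ a)
    (hab : a ≤ b) (hE : 0 ≤ E) (H : ℕ) : (a - s) ^ H * E / a ^ H ≤ (1 - s * (1 / b)) ^ H * E := by
  rw [mul_div_right_comm, ← div_pow, sub_div, div_self ha.ne']
  gcongr ?_ ^ H * _
  · exact sub_nonneg.2 ((div_le_one ha).2 hsa)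
  · rw [mul_one_div]; gcongr

theorem localSDCA_geometric_improvement_general
    (n d K : ℕ) (hn : 0 < n)
    (lam γ : ℝ) (hlam : 0 < lam) (hγ : 0 < γ)
    (x : Fin n → Fin d → ℝ) (hx : ∀ i, euclNorm (x i) ≤ 1)
    (l lstar : Fin n → ℝ → ℝ)
    (hconj : ∀ i, IsFenchelConj (l i) (lstar i))
    (hconv : ∀ i, ConvexOn ℝ Set.univ (l i))
    (hsmooth : ∀ i, SmoothWith (1 / γ) (l i))
    (part : Fin n → Fin K) (hpart : ∀ k, ∃ i, part i = k)
    (k : Fin K) (α : Fin n → ℝ) (H : ℕ)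
    (wbar : Fin d → ℝ)
    (hwbar : wbar = ∑ k' ∈ Finset.univ.erase k, blkA lam x part k' (blkOf part k' α))
    -- one LocalSDCA step on coordinate `i`: replace `β i` by the maximizing value
    (st : {i : Fin n // part i = k} → ({i : Fin n // part i = k} → ℝ) →
      ({i : Fin n // part i = k} → ℝ))
    (hst_max : ∀ i β c,
      locDual lam x lstar part k wbar (Function.update β i c)
        ≤ locDual lam x lstar part k wbar (st i β))
    (ntilde : ℕ)
    (hnt : ntilde = Finset.univ.sup fun k' : Fin K =>
      Fintype.card {i : Fin n // part i = k'}) :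
    -- E[ε_{D,k}(α⟨k←β^(H)⟩)], averaging over the uniformly chosen coordinates
    (∑ ω : Fin H → {i : Fin n // part i = k},
        epsD lam x lstar part k (updBlk part k α (iterRun st H ω (blkOf part k α))))
      / (Fintype.card {i : Fin n // part i = k} : ℝ) ^ H
    ≤ (1 - lam * n * γ / (1 + lam * n * γ) * (1 / (ntilde : ℝ))) ^ H *
        epsD lam x lstar part k α := by
  subst hwbar
  set s := lam * n * γ / (1 + lam * n * γ)
  set f := locDual lam x lstar part k (offBlkA lam x part k α)
  set nk := Fintype.card {i : Fin n // part i = k}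
  have hs₀ : 0 ≤ s := by positivity
  have hnk : (1 : ℝ) ≤ nk := by
    obtain ⟨i, hi⟩ := hpart k
    have : Nonempty {i : Fin n // part i = k} := ⟨⟨i, hi⟩⟩
    exact Nat.one_le_cast.2 Fintype.card_pos
  have hnk_le : (nk : ℝ) ≤ ntilde := by
    rw [hnt]; exact_mod_cast Finset.le_sup (f := fun k' : Fin K =>
      Fintype.card {i : Fin n // part i = k'}) (mem_univ k)
  have hbdd : BddAbove (Set.range f) := bddAbove_range_locDual _ hconj hlam hn
  set S := ⨆ β, f β
  have hstep := sum_sub_locDual_step_le (offBlkA lam x part k α) hγ hlam hn hconj hconv hsmooth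
    (fun i => sqnorm_le_one_of_euclNorm_le_one (hx i)) hs₀ le_rfl st hst_max
    (fun v => ciSup_le fun β => locDual_le_locPrimal _ hconj hlam hn β v)
  have hs_le : s ≤ nk := (div_le_one_of_le₀ (by linarith) (by positivity)).trans hnk
  have hiter := sum_iterRun_le st (fun β => S - f β) (sub_nonneg.2 hs_le) hstep H (blkOf part k α)
  have hgap₀ : 0 ≤ S - f (blkOf part k α) := sub_nonneg.2 (le_ciSup hbdd _)
  simp only [epsD_updBlk part k lam x lstar α hbdd]
  conv_rhs => rw [← updBlk_blkOf part k α, epsD_updBlk part k lam x lstar α hbdd]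
  calc _ ≤ (nk - s) ^ H * (S - f (blkOf part k α)) / nk ^ H := by gcongr
    _ ≤ _ := sub_pow_mul_div_pow_le (by positivity) hs₀ hs_le hnk_le hgap₀ H

/-- LocalSDCA satisfies the local geometric improvement assumption
with `Θ = (1 − (λnγ/(1+λnγ))·(1/ñ))^H`. -/
theorem localSDCA_geometric_improvement
    (n d K : ℕ) (hn : 0 < n) (hd : 0 < d) (hK : 0 < K)
    (lam γ : ℝ) (hlam : 0 < lam) (hγ : 0 < γ)
    (x : Fin n → Fin d → ℝ) (hx : ∀ i, euclNorm (x i) ≤ 1)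
    (l lstar : Fin n → ℝ → ℝ)
    (hconj : ∀ i, IsFenchelConj (l i) (lstar i))
    (hconv : ∀ i, ConvexOn ℝ Set.univ (l i))
    (hsmooth : ∀ i, SmoothWith (1 / γ) (l i))
    (part : Fin n → Fin K) (hpart : ∀ k, ∃ i, part i = k)
    (k : Fin K) (α : Fin n → ℝ) (H : ℕ)
    (wbar : Fin d → ℝ)
    (hwbar : wbar = ∑ k' ∈ Finset.univ.erase k, blkA lam x part k' (blkOf part k' α))
    -- one LocalSDCA step on coordinate `i`: replace `β i` by the maximizing value
    (st : {i : Fin n // part i = k} → ({i : Fin n // part i = k} → ℝ) →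
      ({i : Fin n // part i = k} → ℝ))
    (hst_coord : ∀ i β j, j ≠ i → st i β j = β j)
    (hst_max : ∀ i β c,
      locDual lam x lstar part k wbar (Function.update β i c)
        ≤ locDual lam x lstar part k wbar (st i β))
    (ntilde : ℕ)
    (hnt : ntilde = Finset.univ.sup fun k' : Fin K =>
      Fintype.card {i : Fin n // part i = k'}) :
    -- E[ε_{D,k}(α⟨k←β^(H)⟩)], averaging over the uniformly chosen coordinates
    (∑ ω : Fin H → {i : Fin n // part i = k},
        epsD lam x lstar part k (updBlk part k α (iterRun st H ω (blkOf part k α))))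
      / (Fintype.card {i : Fin n // part i = k} : ℝ) ^ H
    ≤ (1 - lam * n * γ / (1 + lam * n * γ) * (1 / (ntilde : ℝ))) ^ H *
        epsD lam x lstar part k α :=
  localSDCA_geometric_improvement_general n d K hn lam γ hlam hγ x hx l lstar hconj hconv hsmooth
    part hpart k α H wbar hwbar st hst_max ntilde hnt
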